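/- arXiv:1609.02963 — 6 statements merged into one kernel-verified Lean document; each statement's English description precedes it below -/
import Mathlib

section
/- Let a, ā, c, M̄ > 0 with ā² < c² < 1 < a² and M̄ > 0. Define f₁(s, y) = ā^{2s} y + M̄ (a^{2s} − 1) − c^{2s} y. Then for any fixed y ≥ 0, the function s ↦ f₁(s, y) is quasiconvex on [0, ∞), i.e., its sublevel sets are intervals. Specifically, the derivative of f₁(·, y) changes sign at most once, from negative to positive. -/
/-!
Write `ā^{2s} = exp (s α)`, `a^{2s} = exp (s β)`, `c^{2s} = exp (s γ)` with `α = log ā²`,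
`β = log a²`, `γ = log c²`, so that `α < γ < 0 < β`. The derivative of `f₁(·, y)` is
`exp (s γ) · G s` with `G s = α y exp (s (α - γ)) + β M̄ exp (s (β - γ)) - γ y`, and both
exponential terms of `G` are nondecreasing, the first being a negative multiple of a decaying
exponential. So once the derivative is nonnegative it stays so; hence `f₁(·, y)` decreases and
then increases, and its sublevel sets are intervals.
-/

open Real Set

theorem quasiconvexOn_univ_of_deriv_single_crossing {f : ℝ → ℝ} (hf : Differentiable ℝ f)
    (hcross : ∀ x y, x ≤ y → 0 ≤ deriv f x → 0 ≤ deriv f y) : QuasiconvexOn ℝ univ f := by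
  refine convex_univ.quasiconvexOn_of_convex_le fun r => convex_iff_ordConnected.2 ⟨?_⟩
  rintro x (hx : f x ≤ r) w (hw : f w ≤ r) z ⟨hxz, hzw⟩
  show f z ≤ r
  by_cases hz : 0 ≤ deriv f z
  · have hmono : MonotoneOn f (Icc z w) :=
      monotoneOn_of_deriv_nonneg (convex_Icc z w) hf.continuous.continuousOn
        hf.differentiableOn fun t ht => by
          rw [interior_Icc] at ht
          exact hcross z t ht.1.le hz
    exact (hmono (left_mem_Icc.2 hzw) (right_mem_Icc.2 hzw) hzw).trans hw
  · have hanti : AntitoneOn f (Icc x z) :=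
      antitoneOn_of_deriv_nonpos (convex_Icc x z) hf.continuous.continuousOn
        hf.differentiableOn fun t ht => by
          rw [interior_Icc] at ht
          exact not_lt.1 fun ht' => hz (hcross t z ht.2.le ht'.le)
    exact (hanti (left_mem_Icc.2 hxz) (right_mem_Icc.2 hxz) hxz).trans hx

theorem hasDerivAt_exp_mul_const (κ s : ℝ) :
    HasDerivAt (fun t => exp (t * κ)) (exp (s * κ) * κ) s := by
  simpa using ((hasDerivAt_id s).mul_const κ).exp

theorem monotone_const_mul_exp_mul {c κ : ℝ} (h : 0 ≤ c * κ) :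
    Monotone fun s => c * exp (s * κ) := by
  refine monotone_of_deriv_nonneg
    (fun s => ((hasDerivAt_exp_mul_const κ s).const_mul c).differentiableAt) fun s => ?_
  rw [((hasDerivAt_exp_mul_const κ s).const_mul c).deriv, mul_left_comm]
  exact mul_nonneg (exp_pos _).le h

/-- With `α = log ā²`, `β = log a²`, `γ = log c²` this is the paper's `f₁(·, y)`. -/
noncomputable def expCombo (α β γ M y s : ℝ) : ℝ :=
  exp (s * α) * y + M * (exp (s * β) - 1) - exp (s * γ) * y

section expCombo

variable (α β γ M y : ℝ)

theorem hasDerivAt_expCombo (s : ℝ) :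
    HasDerivAt (expCombo α β γ M y)
      (exp (s * α) * α * y + M * (exp (s * β) * β) - exp (s * γ) * γ * y) s :=
  (((hasDerivAt_exp_mul_const α s).mul_const y).add
    (((hasDerivAt_exp_mul_const β s).sub_const 1).const_mul M)).sub
    ((hasDerivAt_exp_mul_const γ s).mul_const y)

theorem differentiable_expCombo : Differentiable ℝ (expCombo α β γ M y) :=
  fun s => (hasDerivAt_expCombo α β γ M y s).differentiableAt

theorem deriv_expCombo (s : ℝ) :
    deriv (expCombo α β γ M y) s =
      exp (s * γ) * (α * y * exp (s * (α - γ)) + β * M * exp (s * (β - γ)) - γ * y) := by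
  have hsplit : ∀ κ, exp (s * κ) = exp (s * γ) * exp (s * (κ - γ)) := fun κ => by
    rw [← exp_add]; ring_nf
  rw [(hasDerivAt_expCombo α β γ M y s).deriv, hsplit α, hsplit β]
  ring

variable {α β γ M y}

theorem expCombo_deriv_single_crossing (hαγ : α ≤ γ) (hγ : γ ≤ 0) (hβ : 0 ≤ β) (hM : 0 ≤ M)
    (hy : 0 ≤ y) (s₁ s₂ : ℝ) (hs : s₁ ≤ s₂) (h₁ : 0 ≤ deriv (expCombo α β γ M y) s₁) :
    0 ≤ deriv (expCombo α β γ M y) s₂ := by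
  set G := fun s => α * y * exp (s * (α - γ)) + β * M * exp (s * (β - γ)) - γ * y
  have hG : Monotone G := by
    refine ((monotone_const_mul_exp_mul ?_).add (monotone_const_mul_exp_mul ?_)).add_const _
    · nlinarith [mul_nonneg (by linarith : 0 ≤ -α) (by linarith : 0 ≤ γ - α)]
    · nlinarith [mul_nonneg (mul_nonneg hβ hM) (by linarith : 0 ≤ β - γ)]
  rw [deriv_expCombo] at h₁ ⊢
  exact mul_nonneg (exp_pos _).le ((nonneg_of_mul_nonneg_right h₁ (exp_pos _)).trans (hG hs))

end expCombo

theorem f1_quasiconvex_general (a abar c M : ℝ)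
    (habar : 0 < abar) (hM : 0 < M)
    (h1 : abar ^ 2 < c ^ 2) (h2 : c ^ 2 < 1) (h3 : 1 < a ^ 2)
    (y : ℝ) (hy : 0 ≤ y) :
    QuasiconvexOn ℝ (Set.Ici (0 : ℝ))
      (fun s : ℝ =>
        Real.exp (2 * s * Real.log abar) * y + M * (Real.exp (2 * s * Real.log a) - 1) -
          Real.exp (2 * s * Real.log c) * y) ∧
    ∀ s₁ s₂ : ℝ, 0 ≤ s₁ → s₁ ≤ s₂ →
      0 ≤ deriv (fun s : ℝ =>
          Real.exp (2 * s * Real.log abar) * y + M * (Real.exp (2 * s * Real.log a) - 1) -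
            Real.exp (2 * s * Real.log c) * y) s₁ →
      0 ≤ deriv (fun s : ℝ =>
          Real.exp (2 * s * Real.log abar) * y + M * (Real.exp (2 * s * Real.log a) - 1) -
            Real.exp (2 * s * Real.log c) * y) s₂ := by
  have hf : (fun s : ℝ =>
      Real.exp (2 * s * Real.log abar) * y + M * (Real.exp (2 * s * Real.log a) - 1) -
        Real.exp (2 * s * Real.log c) * y) =
      expCombo (log (abar ^ 2)) (log (a ^ 2)) (log (c ^ 2)) M y := by
    funext s
    simp only [expCombo, Real.log_pow]
    ring_nf
  have habar2 : 0 < abar ^ 2 := by positivity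
  have hα : log (abar ^ 2) < log (c ^ 2) := log_lt_log habar2 h1
  have hγ : log (c ^ 2) < 0 := log_neg (habar2.trans h1) h2
  have hβ : 0 < log (a ^ 2) := log_pos h3
  have hcross := expCombo_deriv_single_crossing hα.le hγ.le hβ.le hM.le hy
  rw [hf]
  refine ⟨(convex_Ici 0).quasiconvexOn_restrict ?_ (subset_univ _), fun s₁ s₂ _ => hcross s₁ s₂⟩
  exact quasiconvexOn_univ_of_deriv_single_crossing (differentiable_expCombo _ _ _ _ _) hcross

/-- `f₁(s,y) = ā^{2s} y + M̄(a^{2s}-1) - c^{2s} y` is quasiconvex in `s` on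
`[0,∞)`, and its derivative changes sign at most once, from negative to positive. -/
theorem f1_quasiconvex (a abar c M : ℝ)
    (ha : 0 < a) (habar : 0 < abar) (hc : 0 < c) (hM : 0 < M)
    (h1 : abar ^ 2 < c ^ 2) (h2 : c ^ 2 < 1) (h3 : 1 < a ^ 2)
    (y : ℝ) (hy : 0 ≤ y) :
    QuasiconvexOn ℝ (Set.Ici (0 : ℝ))
      (fun s : ℝ =>
        Real.exp (2 * s * Real.log abar) * y + M * (Real.exp (2 * s * Real.log a) - 1) -
          Real.exp (2 * s * Real.log c) * y) ∧
    ∀ s₁ s₂ : ℝ, 0 ≤ s₁ → s₁ ≤ s₂ →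
      0 ≤ deriv (fun s : ℝ =>
          Real.exp (2 * s * Real.log abar) * y + M * (Real.exp (2 * s * Real.log a) - 1) -
            Real.exp (2 * s * Real.log c) * y) s₁ →
      0 ≤ deriv (fun s : ℝ =>
          Real.exp (2 * s * Real.log abar) * y + M * (Real.exp (2 * s * Real.log a) - 1) -
            Real.exp (2 * s * Real.log c) * y) s₂ :=
  f1_quasiconvex_general a abar c M habar hM h1 h2 h3 y hy
end

section
/- Under the standing assumptions 0 < ā² < c² < 1 < a², M̄ > 0, B > 0, define H(s, y) = ā^{2s} y + M̄ (a^{2s} − 1) − max{c^{2s} y, B}, and s**(y) = (log y − log B)/log(1/c²) for y > B. Then for each y > B: H(s, y) = f₁(s, y) < f₂(s, y) for all s ∈ [0, s**(y)), H(s, y) = f₂(s, y) < f₁(s, y) for all s > s**(y), and consequently H(·, y) is quasiconvex on [0, s**(y)] and strongly convex on [s**(y), ∞), where f₁(s,y) = ā^{2s} y + M̄ (a^{2s} − 1) − c^{2s} y and f₂(s,y) = ā^{2s} y + M̄ (a^{2s} − 1) − B. -/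
/-!
Write `b^{2s} = exp (log (b²) s)`. The map `s ↦ c^{2s} y` is strictly decreasing and equals `B`
at `s**(y)`, so the maximum in `H` is `c^{2s} y` before `s**(y)` and `B` after it. The derivative
of `f₁` is `ā^{2s}` times an increasing function, so it changes sign at most once, from negative
to positive, which makes `f₁` quasiconvex. On `[s**(y), ∞)` the second derivative of `f₂` is at
least `M̄ (log a²)² a^{2s**(y)} > 0`, so `f₂` is strongly convex there.
-/

open Real

/-- `b^{2s} := exp(2 s log b)` -/
noncomputable def pw (b s : ℝ) : ℝ := Real.exp (2 * s * Real.log b)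

/-- `f₁(s,y) = ā^{2s} y + M̄(a^{2s}-1) - c^{2s} y` -/
noncomputable def f₁ (a abar c M s y : ℝ) : ℝ :=
  pw abar s * y + M * (pw a s - 1) - pw c s * y

/-- `f₂(s,y) = ā^{2s} y + M̄(a^{2s}-1) - B` -/
noncomputable def f₂ (a abar M B s y : ℝ) : ℝ :=
  pw abar s * y + M * (pw a s - 1) - B

/-- `H(s,y) = ā^{2s} y + M̄(a^{2s}-1) - max{c^{2s} y, B}` -/
noncomputable def Hfun (a abar c M B s y : ℝ) : ℝ :=
  pw abar s * y + M * (pw a s - 1) - max (pw c s * y) B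

/-- `s**(y) = (log y - log B)/log(1/c²)` -/
noncomputable def sstar2 (c B y : ℝ) : ℝ := (Real.log y - Real.log B) / Real.log (1 / c ^ 2)

open Set

theorem pw_eq_exp_log_sq (b s : ℝ) : pw b s = exp (log (b ^ 2) * s) := by
  rw [pw, Real.log_pow]
  ring_nf

theorem QuasiconvexOn.congr {𝕜 E β : Type*} [Semiring 𝕜] [PartialOrder 𝕜] [AddCommMonoid E]
    [SMul 𝕜 E] [LE β] {s : Set E} {f g : E → β} (hf : QuasiconvexOn 𝕜 s f)
    (hfg : EqOn f g s) : QuasiconvexOn 𝕜 s g := fun r => by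
  convert hf r using 1
  exact sep_ext_iff.2 fun x hx => by rw [hfg hx]

theorem StrongConvexOn.congr {E : Type*} [NormedAddCommGroup E] [NormedSpace ℝ E] {s : Set E}
    {m : ℝ} {f g : E → ℝ} (hf : StrongConvexOn s m f) (hfg : EqOn f g s) :
    StrongConvexOn s m g :=
  ⟨hf.1, fun x hx y hy a b ha hb hab => by
    simpa only [← hfg hx, ← hfg hy, ← hfg (hf.1 hx hy ha hb hab)] using hf.2 hx hy ha hb hab⟩

theorem quasiconvexOn_univ_of_monotone_sign_deriv {f : ℝ → ℝ} (hf : Differentiable ℝ f)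
    (hsign : Monotone fun x => SignType.sign (deriv f x)) : QuasiconvexOn ℝ univ f := by
  refine convex_univ.quasiconvexOn_of_convex_le fun r => convex_iff_ordConnected.2
    ⟨fun x (hx : f x ≤ r) z (hz : f z ≤ r) m ⟨hxm, hmz⟩ => ?_⟩
  show f m ≤ r
  rcases le_or_gt (SignType.sign (deriv f m)) 0 with hm | hm
  · have hanti : AntitoneOn f (Icc x m) :=
      antitoneOn_of_deriv_nonpos (convex_Icc x m) hf.continuous.continuousOn
        hf.differentiableOn fun t ht => by
          rw [interior_Icc] at ht
          exact sign_nonpos_iff.1 ((hsign ht.2.le).trans hm)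
    exact (hanti ⟨le_rfl, hxm⟩ ⟨hxm, le_rfl⟩ hxm).trans hx
  · have hmono : MonotoneOn f (Icc m z) :=
      monotoneOn_of_deriv_nonneg (convex_Icc m z) hf.continuous.continuousOn
        hf.differentiableOn fun t ht => by
          rw [interior_Icc] at ht
          exact sign_nonneg_iff.1 (hm.le.trans (hsign ht.1.le))
    exact (hmono ⟨le_rfl, hmz⟩ ⟨hmz, le_rfl⟩ hmz).trans hz

theorem strongConvexOn_of_hasDerivAt2_ge {D : Set ℝ} (hD : Convex ℝ D) {f f' f'' : ℝ → ℝ}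
    {m : ℝ} (hf : ∀ x, HasDerivAt f (f' x) x) (hf' : ∀ x, HasDerivAt f' (f'' x) x)
    (hm : ∀ x ∈ interior D, m ≤ f'' x) : StrongConvexOn D m f := by
  rw [strongConvexOn_iff_convex]
  refine convexOn_of_hasDerivWithinAt2_nonneg hD (f' := fun x => f' x - m * x)
    (f'' := fun x => f'' x - m) ?_ (fun x _ => ?_) (fun x _ => ?_)
    fun x hx => sub_nonneg.2 (hm x hx)
  · exact (continuous_iff_continuousAt.2 fun x => (hf x).continuousAt).continuousOn.sub
      (by fun_prop)
  · simp only [Real.norm_eq_abs, sq_abs]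
    exact (((hf x).sub ((hasDerivAt_pow 2 x).const_mul (m / 2))).congr_deriv
      (by ring)).hasDerivWithinAt
  · exact (((hf' x).sub ((hasDerivAt_id x).const_mul m)).congr_deriv (by simp)).hasDerivWithinAt

theorem hasDerivAt_exp_const_mul (k s : ℝ) :
    HasDerivAt (fun s => exp (k * s)) (k * exp (k * s)) s := by
  simpa [mul_comm] using ((hasDerivAt_id s).const_mul k).exp

section ExpSum

variable {α γ κ M y : ℝ}

theorem quasiconvexOn_univ_exp_sum (hαγ : α < γ) (hγ : γ < 0) (hκ : 0 < κ) (hM : 0 < M)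
    (hy : 0 < y) :
    QuasiconvexOn ℝ univ fun s => exp (α * s) * y + M * (exp (κ * s) - 1) - exp (γ * s) * y := by
  set φ : ℝ → ℝ := fun s => y * α + M * κ * exp ((κ - α) * s) + y * -γ * exp ((γ - α) * s)
  have hφ : Monotone φ := fun s t hst => by
    have : 0 ≤ M * κ := by positivity
    have : 0 ≤ y * -γ := mul_nonneg hy.le (by linarith)
    have : 0 ≤ κ - α := by linarith
    have : 0 ≤ γ - α := by linarith
    dsimp only [φ]
    gcongr
  have hderiv : ∀ s, HasDerivAt
      (fun s => exp (α * s) * y + M * (exp (κ * s) - 1) - exp (γ * s) * y)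
      (exp (α * s) * φ s) s := fun s => by
    refine ((((hasDerivAt_exp_const_mul α s).mul_const y).add
      (((hasDerivAt_exp_const_mul κ s).sub_const 1).const_mul M)).sub
      ((hasDerivAt_exp_const_mul γ s).mul_const y)).congr_deriv ?_
    have hκα : exp (α * s) * exp ((κ - α) * s) = exp (κ * s) := by rw [← exp_add]; ring_nf
    have hγα : exp (α * s) * exp ((γ - α) * s) = exp (γ * s) := by rw [← exp_add]; ring_nf
    linear_combination (-(M * κ)) * hκα + (y * γ) * hγα
  refine quasiconvexOn_univ_of_monotone_sign_deriv (fun s => (hderiv s).differentiableAt)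
    fun s t hst => ?_
  simp only [(hderiv _).deriv, sign_mul, sign_pos (exp_pos _), one_mul]
  exact SignType.sign.monotone (hφ hst)

theorem strongConvexOn_Ici_exp_sum (B s₀ : ℝ) (hκ : 0 ≤ κ) (hM : 0 ≤ M) (hy : 0 ≤ y) :
    StrongConvexOn (Ici s₀) (M * κ ^ 2 * exp (κ * s₀))
      fun s => exp (α * s) * y + M * (exp (κ * s) - 1) - B := by
  refine strongConvexOn_of_hasDerivAt2_ge (convex_Ici s₀)
    (f' := fun s => α * exp (α * s) * y + M * (κ * exp (κ * s)))
    (f'' := fun s => α * (α * exp (α * s)) * y + M * (κ * (κ * exp (κ * s))))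
    (fun s => ?_) (fun s => ?_) fun s hs => ?_
  · exact ((((hasDerivAt_exp_const_mul α s).mul_const y).add
      (((hasDerivAt_exp_const_mul κ s).sub_const 1).const_mul M)).sub_const B)
  · exact (((hasDerivAt_exp_const_mul α s).const_mul α).mul_const y).add
      (((hasDerivAt_exp_const_mul κ s).const_mul κ).const_mul M)
  rw [interior_Ici] at hs
  have hα : 0 ≤ α * (α * exp (α * s)) * y := by
    rw [← mul_assoc]
    exact mul_nonneg (mul_nonneg (mul_self_nonneg α) (exp_pos _).le) hy
  calc M * κ ^ 2 * exp (κ * s₀) ≤ M * κ ^ 2 * exp (κ * s) := by gcongr; exact hs.le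
    _ ≤ _ := by linarith

end ExpSum

section Crossing

variable {c B y : ℝ}

theorem strictAnti_pw_mul (hc₀ : 0 < c ^ 2) (hc₁ : c ^ 2 < 1) (hy : 0 < y) :
    StrictAnti fun s => pw c s * y := fun s t hst => by
  simp only [pw_eq_exp_log_sq]
  exact mul_lt_mul_of_pos_right (exp_lt_exp.2 (mul_lt_mul_of_neg_left hst (log_neg hc₀ hc₁))) hy

theorem pw_sstar2_mul (hc₀ : 0 < c ^ 2) (hc₁ : c ^ 2 < 1) (hB : 0 < B) (hy : 0 < y) :
    pw c (sstar2 c B y) * y = B := by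
  have hL : log (c ^ 2) ≠ 0 := (log_neg hc₀ hc₁).ne
  have hexp : log (c ^ 2) * sstar2 c B y = log B - log y := by
    rw [sstar2, one_div, log_inv]
    field_simp
    ring
  rw [pw_eq_exp_log_sq, hexp, exp_sub, exp_log hB, exp_log hy, div_mul_cancel₀ _ hy.ne']

end Crossing

section Hfun

variable {a abar c M B s y : ℝ}

theorem Hfun_eq_f₁ (h : B ≤ pw c s * y) : Hfun a abar c M B s y = f₁ a abar c M s y := by
  rw [Hfun, f₁, max_eq_left h]

theorem Hfun_eq_f₂ (h : pw c s * y ≤ B) : Hfun a abar c M B s y = f₂ a abar M B s y := by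
  rw [Hfun, f₂, max_eq_right h]

theorem f₁_lt_f₂_iff : f₁ a abar c M s y < f₂ a abar M B s y ↔ B < pw c s * y := by
  rw [f₁, f₂]
  exact sub_lt_sub_iff_left _

theorem f₂_lt_f₁_iff : f₂ a abar M B s y < f₁ a abar c M s y ↔ pw c s * y < B := by
  rw [f₁, f₂]
  exact sub_lt_sub_iff_left _

end Hfun

theorem H_convexity_intervals_general (a abar c M B : ℝ)
    (habar : 0 < abar) (hM : 0 < M) (hB : 0 < B)
    (h1 : abar ^ 2 < c ^ 2) (h2 : c ^ 2 < 1) (h3 : 1 < a ^ 2)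
    (y : ℝ) (hy : B < y) :
    (∀ s : ℝ, 0 ≤ s → s < sstar2 c B y →
        Hfun a abar c M B s y = f₁ a abar c M s y ∧
          f₁ a abar c M s y < f₂ a abar M B s y) ∧
    (∀ s : ℝ, sstar2 c B y < s →
        Hfun a abar c M B s y = f₂ a abar M B s y ∧
          f₂ a abar M B s y < f₁ a abar c M s y) ∧
    QuasiconvexOn ℝ (Set.Icc (0 : ℝ) (sstar2 c B y)) (fun s => Hfun a abar c M B s y) ∧
    ∃ m : ℝ, 0 < m ∧
      StrongConvexOn (Set.Ici (sstar2 c B y)) m (fun s => Hfun a abar c M B s y) := by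
  have hy₀ : 0 < y := hB.trans hy
  have habar₀ : 0 < abar ^ 2 := pow_pos habar 2
  have hc₀ : 0 < c ^ 2 := habar₀.trans h1
  have hκ : 0 < log (a ^ 2) := log_pos h3
  have cross := strictAnti_pw_mul hc₀ h2 hy₀
  have at_sstar2 := pw_sstar2_mul hc₀ h2 hB hy₀
  refine ⟨fun s _ hs => ?_, fun s hs => ?_, ?_, ?_⟩
  · have h : B < pw c s * y := at_sstar2.symm.trans_lt (cross hs)
    exact ⟨Hfun_eq_f₁ h.le, f₁_lt_f₂_iff.2 h⟩
  · have h : pw c s * y < B := (cross hs).trans_eq at_sstar2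
    exact ⟨Hfun_eq_f₂ h.le, f₂_lt_f₁_iff.2 h⟩
  · have hf₁ : QuasiconvexOn ℝ univ fun s => f₁ a abar c M s y := by
      simpa only [f₁, pw_eq_exp_log_sq] using
        quasiconvexOn_univ_exp_sum (log_lt_log habar₀ h1) (log_neg hc₀ h2) hκ hM hy₀
    exact (Convex.quasiconvexOn_restrict hf₁ (subset_univ _) (convex_Icc _ _)).congr fun s hs =>
      (Hfun_eq_f₁ (at_sstar2.symm.trans_le (cross.antitone hs.2))).symm
  · have hf₂ : StrongConvexOn (Ici (sstar2 c B y))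
        (M * log (a ^ 2) ^ 2 * exp (log (a ^ 2) * sstar2 c B y)) fun s => f₂ a abar M B s y := by
      simpa only [f₂, pw_eq_exp_log_sq] using
        strongConvexOn_Ici_exp_sum (α := log (abar ^ 2)) B (sstar2 c B y) hκ.le hM.le hy₀.le
    exact ⟨_, mul_pos (mul_pos hM (pow_pos hκ 2)) (exp_pos _), hf₂.congr fun s hs =>
      (Hfun_eq_f₂ ((cross.antitone hs).trans_eq at_sstar2)).symm⟩

/-- behavior of `H(·,y)` on either side of the crossing point `s**(y)`. -/
theorem H_convexity_intervals (a abar c M B : ℝ)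
    (ha : 0 < a) (habar : 0 < abar) (hc : 0 < c) (hM : 0 < M) (hB : 0 < B)
    (h1 : abar ^ 2 < c ^ 2) (h2 : c ^ 2 < 1) (h3 : 1 < a ^ 2)
    (y : ℝ) (hy : B < y) :
    (∀ s : ℝ, 0 ≤ s → s < sstar2 c B y →
        Hfun a abar c M B s y = f₁ a abar c M s y ∧
          f₁ a abar c M s y < f₂ a abar M B s y) ∧
    (∀ s : ℝ, sstar2 c B y < s →
        Hfun a abar c M B s y = f₂ a abar M B s y ∧
          f₂ a abar M B s y < f₁ a abar c M s y) ∧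
    QuasiconvexOn ℝ (Set.Icc (0 : ℝ) (sstar2 c B y)) (fun s => Hfun a abar c M B s y) ∧
    ∃ m : ℝ, 0 < m ∧
      StrongConvexOn (Set.Ici (sstar2 c B y)) m (fun s => Hfun a abar c M B s y) :=
  H_convexity_intervals_general a abar c M B habar hM hB h1 h2 h3 y hy
end

section
/- Under the assumptions 0 < ā² < c² < 1 < a², M̄ > 0, B > 0, define s**(y) = (log y − log B)/log(1/c²) and F**(y) = ā^{2 s**(y)} y + M̄ (a^{2 s**(y)} − 1) − B for y > 0. Then F** is quasiconvex on (0, ∞): the function g(y) = F**'(y)/ā^{2 s**(y)} is strictly increasing in y, and F**'(y) has the same sign as g(y), so F**' changes sign at most once from negative to positive. -/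
/-- `F**(y) = ā^{2 s**(y)} y + M̄ (a^{2 s**(y)} - 1) - B` -/
noncomputable def Fstar2 (a abar c M B y : ℝ) : ℝ :=
  pw abar (sstar2 c B y) * y + M * (pw a (sstar2 c B y) - 1) - B

/-- `g(y) = F**'(y) / ā^{2 s**(y)}` -/
noncomputable def gfun (a abar c M B y : ℝ) : ℝ :=
  deriv (Fstar2 a abar c M B) y / pw abar (sstar2 c B y)

open Real Set

theorem quasiconvexOn_of_deriv_nonneg_persists {s : Set ℝ} {f : ℝ → ℝ} (hs : Convex ℝ s)
    (hf : ∀ x ∈ s, DifferentiableAt ℝ f x)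
    (hf' : ∀ x ∈ s, ∀ y ∈ s, x ≤ y → 0 ≤ deriv f x → 0 ≤ deriv f y) :
    QuasiconvexOn ℝ s f := by
  intro r
  rw [convex_iff_ordConnected]
  refine ⟨fun x hx y hy z hz => ⟨hs.ordConnected.out hx.1 hy.1 hz, ?_⟩⟩
  have hxz : Icc x z ⊆ s := hs.ordConnected.out hx.1 (hs.ordConnected.out hx.1 hy.1 hz)
  have hzy : Icc z y ⊆ s := hs.ordConnected.out (hs.ordConnected.out hx.1 hy.1 hz) hy.1
  have hcont : ∀ {u v}, Icc u v ⊆ s → ContinuousOn f (Icc u v) := fun h t ht =>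
    (hf t (h ht)).continuousAt.continuousWithinAt
  have hdiff : ∀ {u v}, Icc u v ⊆ s → DifferentiableOn ℝ f (interior (Icc u v)) := fun h t ht =>
    (hf t (h (interior_subset ht))).differentiableWithinAt
  rcases le_or_gt 0 (deriv f z) with hfz | hfz
  · have hmono : MonotoneOn f (Icc z y) := by
      refine monotoneOn_of_deriv_nonneg (convex_Icc z y) (hcont hzy) (hdiff hzy) fun t ht => ?_
      rw [interior_Icc] at ht
      exact hf' z (hzy (left_mem_Icc.2 hz.2)) t (hzy (Ioo_subset_Icc_self ht)) ht.1.le hfz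
    exact (hmono (left_mem_Icc.2 hz.2) (right_mem_Icc.2 hz.2) hz.2).trans hy.2
  · have hanti : AntitoneOn f (Icc x z) := by
      refine antitoneOn_of_deriv_nonpos (convex_Icc x z) (hcont hxz) (hdiff hxz) fun t ht => ?_
      rw [interior_Icc] at ht
      by_contra! ht'
      exact hfz.not_ge <|
        hf' t (hxz (Ioo_subset_Icc_self ht)) z (hxz (right_mem_Icc.2 hz.1)) ht.2.le ht'.le
    exact (hanti (left_mem_Icc.2 hz.1) (right_mem_Icc.2 hz.1) hz.1).trans hx.2

lemma pw_pos (b s : ℝ) : 0 < pw b s := exp_pos _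

/-- `b^{2 s**(y)} = (y / B) ^ elasticity b c`. -/
noncomputable def elasticity (b c : ℝ) : ℝ := 2 * log b / log (1 / c ^ 2)

section

variable {a abar c M B y : ℝ}

lemma elasticity_pos (hc : 0 < c ^ 2) (h2 : c ^ 2 < 1) (h3 : 1 < a ^ 2) :
    0 < elasticity a c := by
  have hL : 0 < log (1 / c ^ 2) := log_pos (one_lt_one_div hc h2)
  have ha : 0 < log (a ^ 2) := log_pos h3
  rw [log_pow] at ha
  exact div_pos (by exact_mod_cast ha) hL

lemma elasticity_add_one_lt (habar : 0 < abar) (h1 : abar ^ 2 < c ^ 2) (h2 : c ^ 2 < 1)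
    (h3 : 1 < a ^ 2) : elasticity abar c + 1 < elasticity a c := by
  have hL : 0 < log (1 / c ^ 2) := log_pos (one_lt_one_div ((pow_pos habar 2).trans h1) h2)
  have ha : 0 < log (a ^ 2) := log_pos h3
  have hac : log (abar ^ 2) < log (c ^ 2) := log_lt_log (pow_pos habar 2) h1
  rw [elasticity, elasticity, div_add_one hL.ne', div_lt_div_iff_of_pos_right hL, one_div,
    log_inv]
  simp only [log_pow] at ha hac ⊢
  push_cast at ha hac ⊢
  linarith

lemma hasDerivAt_pw_sstar2 (b c B : ℝ) (hy : y ≠ 0) :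
    HasDerivAt (fun t => pw b (sstar2 c B t)) (elasticity b c * pw b (sstar2 c B y) / y) y := by
  have hs : HasDerivAt (sstar2 c B) (y⁻¹ / log (1 / c ^ 2)) y :=
    ((hasDerivAt_log hy).sub_const (log B)).div_const _
  have h : HasDerivAt (fun t => pw b (sstar2 c B t))
      (pw b (sstar2 c B y) * (2 * (y⁻¹ / log (1 / c ^ 2)) * log b)) y :=
    ((hs.const_mul 2).mul_const (log b)).exp
  convert h using 1
  rw [elasticity]
  field_simp

lemma hasDerivAt_Fstar2 (hy : y ≠ 0) :
    HasDerivAt (Fstar2 a abar c M B)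
      (pw abar (sstar2 c B y) * (elasticity abar c + 1)
        + M * elasticity a c * pw a (sstar2 c B y) / y) y := by
  have h := (((hasDerivAt_pw_sstar2 abar c B hy).mul (hasDerivAt_id' y)).add
    (((hasDerivAt_pw_sstar2 a c B hy).sub_const 1).const_mul M)).sub_const B
  refine h.congr_deriv ?_
  field_simp

lemma gfun_eq (hy : 0 < y) :
    gfun a abar c M B y = elasticity abar c + 1 + M * elasticity a c *
      exp ((elasticity a c - elasticity abar c - 1) * log y
        - (elasticity a c - elasticity abar c) * log B) := by
  have hP := pw_pos abar (sstar2 c B y)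
  have hratio : exp ((elasticity a c - elasticity abar c - 1) * log y
      - (elasticity a c - elasticity abar c) * log B)
      = pw a (sstar2 c B y) / pw abar (sstar2 c B y) / y := by
    calc _ = exp (2 * sstar2 c B y * log a - 2 * sstar2 c B y * log abar - log y) := by
          rw [elasticity, elasticity, sstar2]
          ring_nf
      _ = _ := by rw [exp_sub, exp_sub, exp_log hy, pw, pw]
  rw [gfun, (hasDerivAt_Fstar2 hy.ne').deriv, hratio]
  field_simp

lemma strictMonoOn_gfun (hM : 0 < M) (habar : 0 < abar) (h1 : abar ^ 2 < c ^ 2)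
    (h2 : c ^ 2 < 1) (h3 : 1 < a ^ 2) : StrictMonoOn (gfun a abar c M B) (Ioi 0) := by
  intro y₁ hy₁ y₂ hy₂ hlt
  have hMa : 0 < M * elasticity a c :=
    mul_pos hM (elasticity_pos ((pow_pos habar 2).trans h1) h2 h3)
  have hexponent : 0 < elasticity a c - elasticity abar c - 1 := by
    linarith [elasticity_add_one_lt habar h1 h2 h3]
  rw [gfun_eq hy₁, gfun_eq hy₂]
  gcongr

lemma deriv_Fstar2_eq_mul_gfun (y : ℝ) :
    deriv (Fstar2 a abar c M B) y = pw abar (sstar2 c B y) * gfun a abar c M B y :=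
  (mul_div_cancel₀ _ (pw_pos _ _).ne').symm

end

theorem Fstar2_quasiconvex_general (a abar c M B : ℝ)
    (habar : 0 < abar) (hM : 0 < M)
    (h1 : abar ^ 2 < c ^ 2) (h2 : c ^ 2 < 1) (h3 : 1 < a ^ 2) :
    QuasiconvexOn ℝ (Set.Ioi (0 : ℝ)) (Fstar2 a abar c M B) ∧
    StrictMonoOn (gfun a abar c M B) (Set.Ioi (0 : ℝ)) ∧
    (∀ y : ℝ, 0 < y →
      (0 < deriv (Fstar2 a abar c M B) y ↔ 0 < gfun a abar c M B y) ∧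
      (deriv (Fstar2 a abar c M B) y < 0 ↔ gfun a abar c M B y < 0)) ∧
    ∀ y₁ y₂ : ℝ, 0 < y₁ → y₁ ≤ y₂ →
      0 ≤ deriv (Fstar2 a abar c M B) y₁ → 0 ≤ deriv (Fstar2 a abar c M B) y₂ := by
  have hg := strictMonoOn_gfun (B := B) hM habar h1 h2 h3
  have hpersist : ∀ y₁ y₂ : ℝ, 0 < y₁ → y₁ ≤ y₂ →
      0 ≤ deriv (Fstar2 a abar c M B) y₁ → 0 ≤ deriv (Fstar2 a abar c M B) y₂ := by
    intro y₁ y₂ hy₁ hle hd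
    rw [deriv_Fstar2_eq_mul_gfun] at hd ⊢
    have hg₁ := (mul_nonneg_iff_of_pos_left (pw_pos _ _)).1 hd
    exact mul_nonneg (pw_pos _ _).le (hg₁.trans (hg.monotoneOn hy₁ (hy₁.trans_le hle) hle))
  refine ⟨quasiconvexOn_of_deriv_nonneg_persists (convex_Ioi 0)
      (fun y hy => (hasDerivAt_Fstar2 (ne_of_gt hy)).differentiableAt)
      (fun y₁ hy₁ y₂ _ => hpersist y₁ y₂ hy₁), hg, fun y _ => ?_, hpersist⟩
  rw [deriv_Fstar2_eq_mul_gfun]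
  exact ⟨mul_pos_iff_of_pos_left (pw_pos _ _), smul_neg_iff_of_pos_left (pw_pos _ _)⟩

/-- `F**` is quasiconvex on `(0,∞)`: `g` is strictly increasing, `F**'` has the
same sign as `g`, and `F**'` changes sign at most once, from negative to positive. -/
theorem Fstar2_quasiconvex (a abar c M B : ℝ)
    (ha : 0 < a) (habar : 0 < abar) (hc : 0 < c) (hM : 0 < M) (hB : 0 < B)
    (h1 : abar ^ 2 < c ^ 2) (h2 : c ^ 2 < 1) (h3 : 1 < a ^ 2) :
    QuasiconvexOn ℝ (Set.Ioi (0 : ℝ)) (Fstar2 a abar c M B) ∧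
    StrictMonoOn (gfun a abar c M B) (Set.Ioi (0 : ℝ)) ∧
    (∀ y : ℝ, 0 < y →
      (0 < deriv (Fstar2 a abar c M B) y ↔ 0 < gfun a abar c M B y) ∧
      (deriv (Fstar2 a abar c M B) y < 0 ↔ gfun a abar c M B y < 0)) ∧
    ∀ y₁ y₂ : ℝ, 0 < y₁ → y₁ ≤ y₂ →
      0 ≤ deriv (Fstar2 a abar c M B) y₁ → 0 ≤ deriv (Fstar2 a abar c M B) y₂ :=
  Fstar2_quasiconvex_general a abar c M B habar hM h1 h2 h3
end

section
/- Under the assumptions 0 < ā² < c² < 1 < a², M̄ > 0, let U(B) be defined by log U(B) = (P₁/P₂) log B + P₃P₄/P₂, where P₁ = log(a²/ā²), P₂ = log(a²c²/ā²), P₃ = log(1/c²), P₄ = log( log(1/ā²)/(M̄ log a²) ), and let F**(y) = ā^{2 s**(y)} y + M̄ (a^{2 s**(y)} − 1) − B with s**(y) = (log y − log B)/log(1/c²). Then the map B ↦ F**(U(B)) is strictly concave on (0, ∞): its second derivative equals −Y(B) log(a²) log(c²/ā²) / (P₂² B²) < 0, where Y(B) = ā^{2 s**(U(B))} U(B) +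 M̄ a^{2 s**(U(B))}. -/
/-- `U(B)`, defined by `log U(B) = (P₁/P₂) log B + P₃P₄/P₂`. -/
noncomputable def Ufun (a abar c M B : ℝ) : ℝ :=
  Real.exp (Real.log (a ^ 2 / abar ^ 2) / Real.log (a ^ 2 * c ^ 2 / abar ^ 2) * Real.log B +
    Real.log (1 / c ^ 2) * Real.log (Real.log (1 / abar ^ 2) / (M * Real.log (a ^ 2))) /
      Real.log (a ^ 2 * c ^ 2 / abar ^ 2))

/-- `Y(B) = ā^{2 s**(U(B))} U(B) + M̄ a^{2 s**(U(B))}` -/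
noncomputable def Yfun (a abar c M B : ℝ) : ℝ :=
  pw abar (sstar2 c B (Ufun a abar c M B)) * Ufun a abar c M B +
    M * pw a (sstar2 c B (Ufun a abar c M B))

/-!
Along the curve `y = U(B)` the exponent `s**(U(B))` is `log B / P₂` plus a constant, and
`log(a²/ā²) + log ā² = log a²`, so both terms of `Y` scale like `B ^ ρ` with `ρ = log a² / P₂`:
`Y(B) = Y(1) B^ρ`. As `F**(U(B)) = Y(B) - B - M̄`, the map is `Y(1) B^ρ - B - M̄`, and
`P₂ = log a² + log(c²/ā²)` gives `0 < ρ < 1`; its second derivative `ρ(ρ - 1) Y(B) / B²` is the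
stated negative quantity.
-/

lemma iteratedDeriv_two_mul_rpow_sub_sub (K ρ M : ℝ) {x : ℝ} (hx : 0 < x) :
    iteratedDeriv 2 (fun x : ℝ => K * x ^ ρ - x - M) x = ρ * (ρ - 1) * (K * x ^ ρ) / x ^ 2 := by
  have hpow : ContDiffAt ℝ 2 (fun x : ℝ => K * x ^ ρ) x :=
    contDiffAt_const.mul (Real.contDiffAt_rpow_const (Or.inl hx.ne'))
  rw [iteratedDeriv_fun_sub (f := fun x => K * x ^ ρ - x) (hpow.sub contDiffAt_id) contDiffAt_const,
    iteratedDeriv_fun_sub (f := fun x => K * x ^ ρ) (g := fun x => x) hpow contDiffAt_id,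
    iteratedDeriv_const_mul_field, iteratedDeriv_eq_iterate, Real.iter_deriv_rpow_const,
    iteratedDeriv_fun_id, iteratedDeriv_const, Real.rpow_sub_natCast hx.ne']
  simp only [descPochhammer, Polynomial.one_comp, mul_one, Polynomial.X_comp,
    Polynomial.eval_mul, Polynomial.eval_X, Polynomial.eval_sub, Polynomial.eval_one,
    OfNat.ofNat_ne_zero, ↓reduceIte, OfNat.ofNat_ne_one, sub_zero]
  ring

lemma strictConcaveOn_mul_rpow_sub_sub {K ρ : ℝ} (hK : 0 < K) (hρ₀ : 0 < ρ) (hρ₁ : ρ < 1) (M : ℝ) :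
    StrictConcaveOn ℝ (Set.Ioi 0) (fun x : ℝ => K * x ^ ρ - x - M) := by
  refine strictConcaveOn_of_deriv2_neg' (convex_Ioi 0) ?_ fun x (hx : 0 < x) => ?_
  · exact fun x (hx : 0 < x) => ((continuousAt_const.mul
      (Real.continuousAt_rpow_const _ _ (Or.inl hx.ne'))).sub continuousAt_id).sub
        continuousAt_const |>.continuousWithinAt
  · rw [← iteratedDeriv_eq_iterate, iteratedDeriv_two_mul_rpow_sub_sub K ρ M hx]
    have : ρ * (ρ - 1) < 0 := mul_neg_of_pos_of_neg hρ₀ (by linarith)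
    exact div_neg_of_neg_of_pos (mul_neg_of_neg_of_pos this (by positivity)) (by positivity)

lemma pw_add (b s t : ℝ) : pw b (s + t) = pw b s * pw b t := by
  simp only [pw, ← Real.exp_add]; ring_nf

section ClosedForm

variable {a abar c M : ℝ}

lemma Fstar2_Ufun (B : ℝ) :
    Fstar2 a abar c M B (Ufun a abar c M B) = Yfun a abar c M B - B - M := by
  unfold Fstar2 Yfun; ring

lemma Yfun_pos (hM : 0 ≤ M) (B : ℝ) : 0 < Yfun a abar c M B := by
  unfold Yfun pw Ufun; positivity

lemma Ufun_eq_mul_exp (B : ℝ) :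
    Ufun a abar c M B = Ufun a abar c M 1 *
      Real.exp (Real.log (a ^ 2 / abar ^ 2) / Real.log (a ^ 2 * c ^ 2 / abar ^ 2) * Real.log B) := by
  simp only [Ufun, Real.log_one, mul_zero, zero_add, ← Real.exp_add]
  ring_nf

lemma sstar2_Ufun (ha : a ≠ 0) (habar : abar ≠ 0) (hc : c ≠ 0)
    (hP₂ : Real.log (a ^ 2 * c ^ 2 / abar ^ 2) ≠ 0) (hP₃ : Real.log (1 / c ^ 2) ≠ 0) (B : ℝ) :
    sstar2 c B (Ufun a abar c M B) =
      sstar2 c 1 (Ufun a abar c M 1) + Real.log B / Real.log (a ^ 2 * c ^ 2 / abar ^ 2) := by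
  have hP₂_eq : Real.log (a ^ 2 * c ^ 2 / abar ^ 2) =
      Real.log (a ^ 2 / abar ^ 2) - Real.log (1 / c ^ 2) := by
    rw [← Real.log_div (by positivity) (by positivity)]
    congr 1; field_simp
  simp only [sstar2, Ufun, Real.log_exp, Real.log_one]
  field_simp
  rw [hP₂_eq]
  ring

lemma Yfun_eq_mul_rpow (ha : a ≠ 0) (habar : abar ≠ 0) (hc : c ≠ 0)
    (hP₂ : Real.log (a ^ 2 * c ^ 2 / abar ^ 2) ≠ 0) (hP₃ : Real.log (1 / c ^ 2) ≠ 0)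
    {B : ℝ} (hB : 0 < B) :
    Yfun a abar c M B = Yfun a abar c M 1 *
      B ^ (Real.log (a ^ 2) / Real.log (a ^ 2 * c ^ 2 / abar ^ 2)) := by
  set P₂ := Real.log (a ^ 2 * c ^ 2 / abar ^ 2)
  set L := Real.log B
  have hP₁ : Real.log (a ^ 2 / abar ^ 2) = Real.log (a ^ 2) - Real.log (abar ^ 2) :=
    Real.log_div (by positivity) (by positivity)
  have h_abar : pw abar (L / P₂) * Real.exp (Real.log (a ^ 2 / abar ^ 2) / P₂ * L) =
      Real.exp (L * (Real.log (a ^ 2) / P₂)) := by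
    rw [pw, ← Real.exp_add, hP₁]; simp only [Real.log_pow]; ring_nf
  have h_a : pw a (L / P₂) = Real.exp (L * (Real.log (a ^ 2) / P₂)) := by
    rw [pw, Real.log_pow]; ring_nf
  rw [Yfun, Yfun, sstar2_Ufun ha habar hc hP₂ hP₃, Ufun_eq_mul_exp B, pw_add, pw_add,
    Real.rpow_def_of_pos hB]
  linear_combination (pw abar (sstar2 c 1 (Ufun a abar c M 1)) * Ufun a abar c M 1) * h_abar +
    (M * pw a (sstar2 c 1 (Ufun a abar c M 1))) * h_a

end ClosedForm

theorem FstarU_strictly_concave_general (a abar c M : ℝ)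
    (habar : 0 < abar) (hM : 0 < M)
    (h1 : abar ^ 2 < c ^ 2) (h2 : c ^ 2 < 1) (h3 : 1 < a ^ 2) :
    StrictConcaveOn ℝ (Set.Ioi (0 : ℝ))
      (fun B : ℝ => Fstar2 a abar c M B (Ufun a abar c M B)) ∧
    ∀ B : ℝ, 0 < B →
      iteratedDeriv 2 (fun B : ℝ => Fstar2 a abar c M B (Ufun a abar c M B)) B =
        -(Yfun a abar c M B * Real.log (a ^ 2) * Real.log (c ^ 2 / abar ^ 2)) /
          ((Real.log (a ^ 2 * c ^ 2 / abar ^ 2)) ^ 2 * B ^ 2) ∧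
      iteratedDeriv 2 (fun B : ℝ => Fstar2 a abar c M B (Ufun a abar c M B)) B < 0 := by
  have ha : a ≠ 0 := by rintro rfl; norm_num at h3
  have hc : c ≠ 0 := by rintro rfl; nlinarith
  have hα : 0 < Real.log (a ^ 2) := Real.log_pos h3
  have hδ : 0 < Real.log (c ^ 2 / abar ^ 2) := Real.log_pos ((one_lt_div (by positivity)).2 h1)
  have hP₂ : Real.log (a ^ 2 * c ^ 2 / abar ^ 2) =
      Real.log (a ^ 2) + Real.log (c ^ 2 / abar ^ 2) := by
    rw [mul_div_assoc, Real.log_mul (by positivity) (by positivity)]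
  have hP₃ : Real.log (1 / c ^ 2) ≠ 0 := (Real.log_pos (one_lt_one_div (by positivity) h2)).ne'
  set ρ := Real.log (a ^ 2) / Real.log (a ^ 2 * c ^ 2 / abar ^ 2) with hρ
  have hρ₀ : 0 < ρ := by rw [hρ, hP₂]; positivity
  have hρ₁ : ρ < 1 := by rw [hρ, hP₂, div_lt_one (by positivity)]; linarith
  have hY {B : ℝ} (hB : 0 < B) : Yfun a abar c M B = Yfun a abar c M 1 * B ^ ρ :=
    Yfun_eq_mul_rpow ha habar.ne' hc (by rw [hP₂]; positivity) hP₃ hB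
  have hF : Set.EqOn (fun B => Fstar2 a abar c M B (Ufun a abar c M B))
      (fun B => Yfun a abar c M 1 * B ^ ρ - B - M) (Set.Ioi 0) := fun B hB => by
    dsimp only; rw [Fstar2_Ufun, hY hB]
  refine ⟨(strictConcaveOn_mul_rpow_sub_sub (Yfun_pos hM.le 1) hρ₀ hρ₁ M).congr hF.symm,
    fun B hB => ?_⟩
  have hD : iteratedDeriv 2 (fun B : ℝ => Fstar2 a abar c M B (Ufun a abar c M B)) B =
      -(Yfun a abar c M B * Real.log (a ^ 2) * Real.log (c ^ 2 / abar ^ 2)) /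
        ((Real.log (a ^ 2 * c ^ 2 / abar ^ 2)) ^ 2 * B ^ 2) := by
    rw [hF.iteratedDeriv_of_isOpen isOpen_Ioi 2 hB, iteratedDeriv_two_mul_rpow_sub_sub _ _ _ hB,
      ← hY hB, hρ, hP₂]
    field_simp
    ring
  have hYB : 0 < Yfun a abar c M B := Yfun_pos hM.le B
  refine ⟨hD, ?_⟩
  rw [hD, hP₂]
  exact div_neg_of_neg_of_pos (neg_neg_of_pos (by positivity)) (by positivity)

/-- `B ↦ F**(U(B))` is strictly concave on `(0,∞)`, with the stated negative
second derivative. -/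
theorem FstarU_strictly_concave (a abar c M : ℝ)
    (ha : 0 < a) (habar : 0 < abar) (hc : 0 < c) (hM : 0 < M)
    (h1 : abar ^ 2 < c ^ 2) (h2 : c ^ 2 < 1) (h3 : 1 < a ^ 2) :
    StrictConcaveOn ℝ (Set.Ioi (0 : ℝ))
      (fun B : ℝ => Fstar2 a abar c M B (Ufun a abar c M B)) ∧
    ∀ B : ℝ, 0 < B →
      iteratedDeriv 2 (fun B : ℝ => Fstar2 a abar c M B (Ufun a abar c M B)) B =
        -(Yfun a abar c M B * Real.log (a ^ 2) * Real.log (c ^ 2 / abar ^ 2)) /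
          ((Real.log (a ^ 2 * c ^ 2 / abar ^ 2)) ^ 2 * B ^ 2) ∧
      iteratedDeriv 2 (fun B : ℝ => Fstar2 a abar c M B (Ufun a abar c M B)) B < 0 :=
  FstarU_strictly_concave_general a abar c M habar hM h1 h2 h3
end

section
/- Under the assumptions 0 < ā² < c² < 1 < a², M̄ > 0, there exists B* > 0 with B* ≥ B_c := M̄ log(a²)/log(c²/ā²) such that F**(U(B*)) = 0 and F**(U(B)) < 0 for all B > B*, where U(B) and F** are as defined via the crossing points of the functions f₁ and f₂. -/
open Real Filter Set

theorem Continuous.exists_ge_eq_zero_of_eventually_neg {f : ℝ → ℝ} (hf : Continuous f)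
    (hneg : ∀ᶠ x in atTop, f x < 0) {y : ℝ} (hy : 0 ≤ f y) : ∃ z, y ≤ z ∧ f z = 0 := by
  obtain ⟨T, hT, hyT⟩ := (hneg.and (eventually_ge_atTop y)).exists
  obtain ⟨z, hz, hfz⟩ := intermediate_value_Icc' hyT hf.continuousOn ⟨hT.le, hy⟩
  exact ⟨z, hz.1, hfz⟩

theorem Continuous.exists_last_zero_of_eventually_neg {f : ℝ → ℝ} (hf : Continuous f)
    (hneg : ∀ᶠ x in atTop, f x < 0) {x₀ : ℝ} (h₀ : 0 ≤ f x₀) :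
    ∃ x, x₀ ≤ x ∧ f x = 0 ∧ ∀ y, x < y → f y < 0 := by
  set S := {x | x₀ ≤ x ∧ f x = 0}
  obtain ⟨T, hT⟩ := eventually_atTop.1 hneg
  have hS : S.Nonempty := hf.exists_ge_eq_zero_of_eventually_neg hneg h₀
  have hbdd : BddAbove S := ⟨T, fun x hx => le_of_not_ge fun h => (hT x h).ne hx.2⟩
  have hclosed : IsClosed S :=
    (isClosed_le continuous_const continuous_id).inter (isClosed_eq hf continuous_const)
  obtain ⟨hx₀, hzero⟩ := hclosed.csSup_mem hS hbdd
  refine ⟨sSup S, hx₀, hzero, fun y hy => ?_⟩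
  by_contra! hfy
  obtain ⟨z, hyz, hz⟩ := hf.exists_ge_eq_zero_of_eventually_neg hneg hfy
  exact (le_csSup hbdd ⟨by linarith, hz⟩).not_gt (hy.trans_le hyz)

noncomputable def FstarU (α β p M t : ℝ) : ℝ :=
  exp (α * t - β * p) + M * exp (α * (t + p)) - M - exp t

theorem continuous_FstarU (α β p M : ℝ) : Continuous (FstarU α β p M) := by
  unfold FstarU
  fun_prop

theorem FstarU_eventually_neg {α β M : ℝ} (p : ℝ) (hβ : 0 < β) (hαβ : α + β = 1) (hM : 0 ≤ M) :
    ∀ᶠ t in atTop, FstarU α β p M t < 0 := by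
  have hexp : Tendsto (fun t => exp (β * t)) atTop atTop :=
    tendsto_exp_atTop.comp (tendsto_id.const_mul_atTop hβ)
  filter_upwards [hexp.eventually_gt_atTop (exp (-β * p) + M * exp (α * p))] with t ht
  have hfactor : FstarU α β p M t =
      exp (α * t) * (exp (-β * p) + M * exp (α * p) - exp (β * t)) - M := by
    have e₁ : exp (α * t - β * p) = exp (α * t) * exp (-β * p) := by rw [← exp_add]; ring_nf
    have e₂ : exp (α * (t + p)) = exp (α * t) * exp (α * p) := by rw [← exp_add]; ring_nf
    have e₃ : exp t = exp (α * t) * exp (β * t) := by rw [← exp_add, ← add_mul, hαβ, one_mul]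
    rw [FstarU, e₁, e₂, e₃]
    ring
  rw [hfactor]
  nlinarith [exp_pos (α * t)]

theorem FstarU_log_nonneg {α β M : ℝ} (p : ℝ) (hα : 0 < α) (hβ : 0 < β) (hαβ : α + β = 1)
    (hM : 0 < M) : 0 ≤ FstarU α β p M (log (M * α / β)) := by
  set s := log (M * α / β) + p
  have hconvex : 1 ≤ α * exp (-β * s) + β * exp (α * s) := by
    have h := convexOn_exp.2 (mem_univ (-β * s)) (mem_univ (α * s)) hα.le hβ.le hαβ
    simp only [smul_eq_mul] at h
    rwa [show α * (-β * s) + β * (α * s) = 0 by ring, exp_zero] at h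
  have hscaled : β * FstarU α β p M (log (M * α / β)) =
      M * (α * exp (-β * s) + β * exp (α * s) - 1) := by
    rw [FstarU, show α * log (M * α / β) - β * p = log (M * α / β) + -β * s by
        linear_combination log (M * α / β) * hαβ, exp_add, exp_log (by positivity)]
    field_simp
    linear_combination -hαβ
  exact (mul_nonneg_iff_of_pos_left hβ).1 (hscaled ▸ mul_nonneg hM.le (by linarith))

theorem Fstar2_Ufun_s7 {a abar c M B : ℝ} (ha : a ≠ 0) (habar : abar ≠ 0) (hc : c ≠ 0)
    (hP₃ : log (1 / c ^ 2) ≠ 0) (hP₂ : log (a ^ 2 * c ^ 2 / abar ^ 2) ≠ 0) (hB : 0 < B) :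
    Fstar2 a abar c M B (Ufun a abar c M B) =
      FstarU (log (a ^ 2) / log (a ^ 2 * c ^ 2 / abar ^ 2))
        (log (c ^ 2 / abar ^ 2) / log (a ^ 2 * c ^ 2 / abar ^ 2))
        (log (log (1 / abar ^ 2) / (M * log (a ^ 2)))) M (log B) := by
  have ha2 : a ^ 2 ≠ 0 := pow_ne_zero 2 ha
  have habar2 : abar ^ 2 ≠ 0 := pow_ne_zero 2 habar
  have hc2 : c ^ 2 ≠ 0 := pow_ne_zero 2 hc
  have hP₁ : log (a ^ 2 / abar ^ 2) = log (a ^ 2) - log (abar ^ 2) := log_div ha2 habar2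
  have hP₂' : log (a ^ 2 * c ^ 2 / abar ^ 2) = log (a ^ 2) + log (c ^ 2) - log (abar ^ 2) := by
    rw [log_div (mul_ne_zero ha2 hc2) habar2, log_mul ha2 hc2]
  have hP₃' : log (1 / c ^ 2) = -log (c ^ 2) := by rw [one_div, log_inv]
  have hQ : log (c ^ 2 / abar ^ 2) = log (c ^ 2) - log (abar ^ 2) := log_div hc2 habar2
  have hloga : log a = log (a ^ 2) / 2 := by rw [log_pow]; push_cast; ring
  have hlogabar : log abar = log (abar ^ 2) / 2 := by rw [log_pow]; push_cast; ring
  rw [hP₃'] at hP₃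
  rw [hP₂'] at hP₂
  simp only [Fstar2, Ufun, pw, sstar2, FstarU, log_exp, hP₁, hP₂', hP₃', hQ, hloga, hlogabar,
    exp_log hB, ← exp_add]
  set la := log (a ^ 2)
  set lb := log (abar ^ 2)
  set lc := log (c ^ 2)
  set p := log (log (1 / abar ^ 2) / (M * la))
  set x := log B
  have hlc : lc ≠ 0 := neg_ne_zero.1 hP₃
  have hs : ((la - lb) / (la + lc - lb) * x + -lc * p / (la + lc - lb) - x) / -lc =
      (x + p) / (la + lc - lb) := by
    field_simp
    ring
  have e₁ : 2 * ((x + p) / (la + lc - lb)) * (lb / 2) +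
      ((la - lb) / (la + lc - lb) * x + -lc * p / (la + lc - lb)) =
      la / (la + lc - lb) * x - (lc - lb) / (la + lc - lb) * p := by
    field_simp
    ring
  have e₂ : 2 * ((x + p) / (la + lc - lb)) * (la / 2) = la / (la + lc - lb) * (x + p) := by ring
  rw [hs, e₁, e₂]
  ring

theorem exists_Bstar_general (a abar c M : ℝ)
    (habar : 0 < abar) (hM : 0 < M)
    (h1 : abar ^ 2 < c ^ 2) (h2 : c ^ 2 < 1) (h3 : 1 < a ^ 2) :
    ∃ Bstar : ℝ, 0 < Bstar ∧
      M * Real.log (a ^ 2) / Real.log (c ^ 2 / abar ^ 2) ≤ Bstar ∧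
      Fstar2 a abar c M Bstar (Ufun a abar c M Bstar) = 0 ∧
      ∀ B : ℝ, Bstar < B → Fstar2 a abar c M B (Ufun a abar c M B) < 0 := by
  have ha : a ≠ 0 := by rintro rfl; norm_num at h3
  have hc : c ≠ 0 := by rintro rfl; nlinarith [sq_nonneg abar]
  have hla : 0 < log (a ^ 2) := log_pos h3
  have hQ : 0 < log (c ^ 2 / abar ^ 2) := log_pos ((one_lt_div (by positivity)).2 h1)
  have hP₃ : log (1 / c ^ 2) ≠ 0 := (log_pos ((one_lt_div (by positivity)).2 h2)).ne'
  have hP₂ : log (a ^ 2 * c ^ 2 / abar ^ 2) = log (a ^ 2) + log (c ^ 2 / abar ^ 2) := by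
    rw [mul_div_assoc, log_mul (by positivity) (by positivity)]
  have hP₂pos : 0 < log (a ^ 2 * c ^ 2 / abar ^ 2) := by linarith
  set α := log (a ^ 2) / log (a ^ 2 * c ^ 2 / abar ^ 2)
  set β := log (c ^ 2 / abar ^ 2) / log (a ^ 2 * c ^ 2 / abar ^ 2)
  have hα : 0 < α := div_pos hla hP₂pos
  have hβ : 0 < β := div_pos hQ hP₂pos
  have hαβ : α + β = 1 := by rw [← add_div, ← hP₂, div_self hP₂pos.ne']
  have hBc : M * log (a ^ 2) / log (c ^ 2 / abar ^ 2) = M * α / β := by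
    simp only [α, β]
    field_simp
  obtain ⟨t, hBct, hzero, hneg⟩ := (continuous_FstarU α β _ M).exists_last_zero_of_eventually_neg
    (FstarU_eventually_neg _ hβ hαβ hM.le) (FstarU_log_nonneg _ hα hβ hαβ hM)
  have hFU {B : ℝ} (hB : 0 < B) := Fstar2_Ufun_s7 (M := M) ha habar.ne' hc hP₃ hP₂pos.ne' hB
  refine ⟨exp t, exp_pos t, ?_, ?_, fun B hB => ?_⟩
  · rwa [hBc, ← log_le_iff_le_exp (by positivity)]
  · rwa [hFU (exp_pos t), log_exp]
  · have hBpos := (exp_pos t).trans hB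
    exact hFU hBpos ▸ hneg _ ((lt_log_iff_exp_lt hBpos).2 hB)

/-- existence of `B* ≥ B_c` with `F**(U(B*)) = 0` and `F**(U(B)) < 0` for
`B > B*`. -/
theorem exists_Bstar (a abar c M : ℝ)
    (ha : 0 < a) (habar : 0 < abar) (hc : 0 < c) (hM : 0 < M)
    (h1 : abar ^ 2 < c ^ 2) (h2 : c ^ 2 < 1) (h3 : 1 < a ^ 2) :
    ∃ Bstar : ℝ, 0 < Bstar ∧
      M * Real.log (a ^ 2) / Real.log (c ^ 2 / abar ^ 2) ≤ Bstar ∧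
      Fstar2 a abar c M Bstar (Ufun a abar c M Bstar) = 0 ∧
      ∀ B : ℝ, Bstar < B → Fstar2 a abar c M B (Ufun a abar c M B) < 0 :=
  exists_Bstar_general a abar c M habar hM h1 h2 h3
end

section
/- Monotonicity of the open-loop performance function: Let 0 < ā² < c² < 1 < a², M̄ > 0 and define H(s, y) = ā^{2s} y + M̄ (a^{2s} − 1) − max{c^{2s} y, B}. There exists B* > B_c := M̄ log(a²)/log(c²/ā²) > 0 such that if B > B*, then for every y ≥ 0 and all 0 ≤ s₁ ≤ s₂, H(s₁, y) > 0 implies H(s₂, y) > 0. -/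
lemma exp_sub_le' (u v : ℝ) : Real.exp v - Real.exp u ≤ (v - u) * Real.exp v := by
  have h1 := Real.add_one_le_exp (u - v)
  have h2 : Real.exp u = Real.exp v * Real.exp (u - v) := by
    rw [← Real.exp_add]; congr 1; ring
  nlinarith [Real.exp_pos v]

lemma exp_sub_ge' (u v : ℝ) : (v - u) * Real.exp u ≤ Real.exp v - Real.exp u := by
  have h1 := Real.add_one_le_exp (v - u)
  have h2 : Real.exp v = Real.exp u * Real.exp (v - u) := by
    rw [← Real.exp_add]; congr 1; ring
  nlinarith [Real.exp_pos u]

/-- Proposition: monotonicity of the open-loop performance function: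
there exists `B* > B_c > 0` such that for all `B > B*`, `H(s₁,y) > 0` implies
`H(s₂,y) > 0` whenever `s₂ ≥ s₁ ≥ 0`, for every `y ≥ 0`. -/
theorem H_monotonicity (a abar c M : ℝ)
    (ha : 0 < a) (habar : 0 < abar) (hc : 0 < c) (hM : 0 < M)
    (h1 : abar ^ 2 < c ^ 2) (h2 : c ^ 2 < 1) (h3 : 1 < a ^ 2) :
    0 < M * Real.log (a ^ 2) / Real.log (c ^ 2 / abar ^ 2) ∧
    ∃ Bstar : ℝ,
      M * Real.log (a ^ 2) / Real.log (c ^ 2 / abar ^ 2) < Bstar ∧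
      ∀ B : ℝ, Bstar < B → ∀ y : ℝ, 0 ≤ y → ∀ s₁ s₂ : ℝ, 0 ≤ s₁ → s₁ ≤ s₂ →
        0 < Hfun a abar c M B s₁ y → 0 < Hfun a abar c M B s₂ y := by
  have ha1 : 1 < a := by nlinarith
  have hc1 : c < 1 := by nlinarith
  have hac : abar < c := by nlinarith
  have hab1 : abar < 1 := lt_trans hac hc1
  have hα : 0 < Real.log a := Real.log_pos ha1
  have hβ : Real.log c < 0 := Real.log_neg hc hc1
  have hγ : Real.log abar < 0 := Real.log_neg habar hab1
  have hγβ : Real.log abar < Real.log c := Real.log_lt_log habar hac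
  have hβγ : 0 < Real.log c - Real.log abar := by linarith
  have hαβ : 0 < Real.log a - Real.log c := by linarith
  have hla2 : Real.log (a ^ 2) = 2 * Real.log a := by
    rw [Real.log_pow]; push_cast; ring
  have hlq : Real.log (c ^ 2 / abar ^ 2) = 2 * Real.log c - 2 * Real.log abar := by
    rw [Real.log_div (by positivity) (by positivity), Real.log_pow, Real.log_pow]
    push_cast; ring
  have hBc : 0 < M * Real.log (a ^ 2) / Real.log (c ^ 2 / abar ^ 2) := by
    rw [hla2, hlq]
    apply div_pos (by linarith [mul_pos hM hα]) (by linarith)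
  obtain ⟨Kq, hKqd⟩ : ∃ x : ℝ, x = (Real.log a - Real.log abar) / Real.log a := ⟨_, rfl⟩
  obtain ⟨Lq, hLqd⟩ : ∃ x : ℝ, x = (Real.log a - Real.log abar) / (Real.log a - Real.log c) :=
    ⟨_, rfl⟩
  obtain ⟨E, hEd⟩ : ∃ x : ℝ, x = max Kq Lq := ⟨_, rfl⟩
  have hKq1 : 1 < Kq := by
    rw [hKqd, lt_div_iff₀ hα]; linarith
  have hE1 : 1 < E := by rw [hEd]; exact lt_of_lt_of_le hKq1 (le_max_left _ _)
  obtain ⟨S, hSd⟩ : ∃ x : ℝ, x = Real.log E / (2 * (Real.log c - Real.log abar)) := ⟨_, rfl⟩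
  obtain ⟨G, hGd⟩ : ∃ x : ℝ, x = M * Real.log a * Real.exp (2 * S * Real.log a) /
      ((Real.log c - Real.log abar) * Real.exp (2 * S * Real.log abar)) := ⟨_, rfl⟩
  obtain ⟨C, hCd⟩ : ∃ x : ℝ, x = G + M * (Real.exp (2 * S * Real.log a) - 1) := ⟨_, rfl⟩
  refine ⟨hBc, max C (M * Real.log (a ^ 2) / Real.log (c ^ 2 / abar ^ 2)) + 1, ?_, ?_⟩
  · have := le_max_right C (M * Real.log (a ^ 2) / Real.log (c ^ 2 / abar ^ 2))
    linarith
  intro B hB y hy s₁ s₂ hs₁ hs12 hH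
  have hBpos : 0 < B := by
    have := le_max_right C (M * Real.log (a ^ 2) / Real.log (c ^ 2 / abar ^ 2))
    linarith
  have hHdef1 : Hfun a abar c M B s₁ y =
      Real.exp (2 * s₁ * Real.log abar) * y + M * (Real.exp (2 * s₁ * Real.log a) - 1) -
        max (Real.exp (2 * s₁ * Real.log c) * y) B := rfl
  rw [hHdef1] at hH
  have hf1 : Real.exp (2 * s₁ * Real.log c) * y <
      Real.exp (2 * s₁ * Real.log abar) * y + M * (Real.exp (2 * s₁ * Real.log a) - 1) := by
    have := le_max_left (Real.exp (2 * s₁ * Real.log c) * y) B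
    linarith
  have hf2 : B < Real.exp (2 * s₁ * Real.log abar) * y +
      M * (Real.exp (2 * s₁ * Real.log a) - 1) := by
    have := le_max_right (Real.exp (2 * s₁ * Real.log c) * y) B
    linarith
  have hmono1 : Real.exp (2 * s₁ * Real.log abar) ≤ Real.exp (2 * s₁ * Real.log c) :=
    Real.exp_le_exp.mpr (by linarith [mul_nonneg hs₁ hβγ.le])
  have hea1 : 1 < Real.exp (2 * s₁ * Real.log a) := by
    by_contra hcon
    push_neg at hcon
    have h4 := mul_le_mul_of_nonneg_left
      (show Real.exp (2 * s₁ * Real.log a) - 1 ≤ 0 by linarith) hM.le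
    have h5 := mul_le_mul_of_nonneg_right hmono1 hy
    linarith
  have ht : 0 < 2 * s₁ * Real.log a := by
    have h := hea1
    rw [show (1 : ℝ) = Real.exp 0 from Real.exp_zero.symm] at h
    exact Real.exp_lt_exp.mp h
  have hs1pos : 0 < s₁ := by
    by_contra hcon
    push_neg at hcon
    have := mul_nonneg (neg_nonneg.mpr hcon) hα.le
    linarith
  have hdy : (Real.exp (2 * s₁ * Real.log c) - Real.exp (2 * s₁ * Real.log abar)) * y <
      M * (Real.exp (2 * s₁ * Real.log a) - 1) := by linarith
  -- Step 2: B large forces s₁ > S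
  have hS1 : S < s₁ := by
    by_contra hcon
    push_neg at hcon
    have hSs : 0 ≤ S - s₁ := by linarith
    have hb1 : Real.exp (2 * s₁ * Real.log a) ≤ Real.exp (2 * S * Real.log a) :=
      Real.exp_le_exp.mpr (by linarith [mul_nonneg hSs hα.le])
    have hb2 : Real.exp (2 * S * Real.log abar) ≤ Real.exp (2 * s₁ * Real.log abar) :=
      Real.exp_le_exp.mpr (by linarith [mul_nonneg hSs (show (0:ℝ) ≤ -Real.log abar by linarith)])
    have hb3 : Real.exp (2 * s₁ * Real.log abar) ≤ 1 := by
      rw [show (1 : ℝ) = Real.exp 0 from Real.exp_zero.symm]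
      exact Real.exp_le_exp.mpr
        (by linarith [mul_nonneg hs₁ (show (0:ℝ) ≤ -Real.log abar by linarith)])
    have hd1 : 2 * s₁ * (Real.log c - Real.log abar) * Real.exp (2 * s₁ * Real.log abar) ≤
        Real.exp (2 * s₁ * Real.log c) - Real.exp (2 * s₁ * Real.log abar) := by
      linarith [exp_sub_ge' (2 * s₁ * Real.log abar) (2 * s₁ * Real.log c)]
    have hA1ub : Real.exp (2 * s₁ * Real.log a) - 1 ≤
        2 * s₁ * Real.log a * Real.exp (2 * S * Real.log a) := by
      have h := exp_sub_le' 0 (2 * s₁ * Real.log a)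
      rw [Real.exp_zero] at h
      linarith [mul_le_mul_of_nonneg_left hb1 ht.le, h]
    have hyb : 2 * s₁ * ((Real.log c - Real.log abar) * Real.exp (2 * S * Real.log abar) * y) <
        2 * s₁ * (M * Real.log a * Real.exp (2 * S * Real.log a)) := by
      have t1 : 2 * s₁ * (Real.log c - Real.log abar) * Real.exp (2 * S * Real.log abar) * y ≤
          2 * s₁ * (Real.log c - Real.log abar) * Real.exp (2 * s₁ * Real.log abar) * y := by
        apply mul_le_mul_of_nonneg_right _ hy
        exact mul_le_mul_of_nonneg_left hb2 (by linarith [mul_nonneg hs₁ hβγ.le])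
      have t2 : 2 * s₁ * (Real.log c - Real.log abar) * Real.exp (2 * s₁ * Real.log abar) * y ≤
          (Real.exp (2 * s₁ * Real.log c) - Real.exp (2 * s₁ * Real.log abar)) * y :=
        mul_le_mul_of_nonneg_right hd1 hy
      have t3 : M * (Real.exp (2 * s₁ * Real.log a) - 1) ≤
          M * (2 * s₁ * Real.log a * Real.exp (2 * S * Real.log a)) :=
        mul_le_mul_of_nonneg_left hA1ub hM.le
      linarith
    have hyG : y < G := by
      have h2s : (0 : ℝ) < 2 * s₁ := by linarith
      have hy2 := (mul_lt_mul_iff_right₀ h2s).mp hyb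
      rw [hGd, lt_div_iff₀ (mul_pos hβγ (Real.exp_pos _))]
      linarith
    have hA1ub2 : M * (Real.exp (2 * s₁ * Real.log a) - 1) ≤
        M * (Real.exp (2 * S * Real.log a) - 1) :=
      mul_le_mul_of_nonneg_left (by linarith) hM.le
    have hBC : B < C := by
      have heby : Real.exp (2 * s₁ * Real.log abar) * y ≤ y := by
        linarith [mul_le_mul_of_nonneg_right hb3 hy]
      rw [hCd]; linarith
    have := le_max_left C (M * Real.log (a ^ 2) / Real.log (c ^ 2 / abar ^ 2))
    linarith
  -- Step 3: propagate positivity from s₁ to s₂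
  have hΔ : 0 ≤ s₂ - s₁ := by linarith
  have split : ∀ l : ℝ, Real.exp (2 * s₂ * l) =
      Real.exp (2 * s₁ * l) * Real.exp (2 * (s₂ - s₁) * l) := by
    intro l; rw [← Real.exp_add]; congr 1; ring
  have hX : E < Real.exp (2 * s₁ * (Real.log c - Real.log abar)) := by
    have hEpos : (0 : ℝ) < E := by linarith
    have hne : (Real.log c - Real.log abar) ≠ 0 := ne_of_gt hβγ
    have h0 : 2 * S * (Real.log c - Real.log abar) = Real.log E := by
      rw [hSd]; field_simp
    calc E = Real.exp (2 * S * (Real.log c - Real.log abar)) := by rw [h0, Real.exp_log hEpos]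
      _ < Real.exp (2 * s₁ * (Real.log c - Real.log abar)) := by
          apply Real.exp_lt_exp.mpr
          have := mul_pos (show (0:ℝ) < s₁ - S by linarith) hβγ
          linarith
  have hXK : Kq ≤ Real.exp (2 * s₁ * (Real.log c - Real.log abar)) :=
    le_of_lt (lt_of_le_of_lt (by rw [hEd]; exact le_max_left _ _) hX)
  have hXL : Lq ≤ Real.exp (2 * s₁ * (Real.log c - Real.log abar)) :=
    le_of_lt (lt_of_le_of_lt (by rw [hEd]; exact le_max_right _ _) hX)
  have hsplitβγ : Real.exp (2 * s₁ * Real.log c) =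
      Real.exp (2 * s₁ * Real.log abar) * Real.exp (2 * s₁ * (Real.log c - Real.log abar)) := by
    rw [← Real.exp_add]; congr 1; ring
  have hKα : Kq * Real.log a = Real.log a - Real.log abar := by
    rw [hKqd, div_mul_cancel₀ _ (ne_of_gt hα)]
  have hLα : Lq * (Real.log a - Real.log c) = Real.log a - Real.log abar := by
    rw [hLqd, div_mul_cancel₀ _ (ne_of_gt hαβ)]
  have hKs : Real.exp (2 * s₁ * Real.log abar) * (Real.log a - Real.log abar) ≤
      Real.exp (2 * s₁ * Real.log c) * Real.log a := by
    rw [hsplitβγ, ← hKα]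
    linarith [mul_le_mul_of_nonneg_left (mul_le_mul_of_nonneg_right hXK hα.le)
      (Real.exp_pos (2 * s₁ * Real.log abar)).le]
  have hLs : Real.exp (2 * s₁ * Real.log abar) * (Real.log a - Real.log abar) ≤
      Real.exp (2 * s₁ * Real.log c) * (Real.log a - Real.log c) := by
    rw [hsplitβγ, ← hLα]
    linarith [mul_le_mul_of_nonneg_left (mul_le_mul_of_nonneg_right hXL hαβ.le)
      (Real.exp_pos (2 * s₁ * Real.log abar)).le]
  have m1 : Real.exp (2 * (s₂ - s₁) * Real.log c) - Real.exp (2 * (s₂ - s₁) * Real.log abar) ≤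
      (2 * (s₂ - s₁) * Real.log c - 2 * (s₂ - s₁) * Real.log abar) *
        Real.exp (2 * (s₂ - s₁) * Real.log c) := exp_sub_le' _ _
  have m2 : (2 * (s₂ - s₁) * Real.log a - 2 * (s₂ - s₁) * Real.log c) *
      Real.exp (2 * (s₂ - s₁) * Real.log c) ≤
      Real.exp (2 * (s₂ - s₁) * Real.log a) - Real.exp (2 * (s₂ - s₁) * Real.log c) :=
    exp_sub_ge' _ _
  have claim1 : (Real.log a - Real.log c) *
      (Real.exp (2 * (s₂ - s₁) * Real.log a) - Real.exp (2 * (s₂ - s₁) * Real.log abar)) ≤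
      (Real.log a - Real.log abar) *
      (Real.exp (2 * (s₂ - s₁) * Real.log a) - Real.exp (2 * (s₂ - s₁) * Real.log c)) := by
    linarith [mul_le_mul_of_nonneg_left m1 hαβ.le, mul_le_mul_of_nonneg_left m2 hβγ.le]
  have n1 : 1 - Real.exp (2 * (s₂ - s₁) * Real.log abar) ≤ -(2 * (s₂ - s₁) * Real.log abar) := by
    have h := exp_sub_le' (2 * (s₂ - s₁) * Real.log abar) 0
    rw [Real.exp_zero] at h
    linarith
  have n2 : 2 * (s₂ - s₁) * Real.log a ≤ Real.exp (2 * (s₂ - s₁) * Real.log a) - 1 := by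
    have h := exp_sub_ge' 0 (2 * (s₂ - s₁) * Real.log a)
    rw [Real.exp_zero] at h
    linarith
  have claim2 : Real.log a *
      (Real.exp (2 * (s₂ - s₁) * Real.log a) - Real.exp (2 * (s₂ - s₁) * Real.log abar)) ≤
      (Real.log a - Real.log abar) * (Real.exp (2 * (s₂ - s₁) * Real.log a) - 1) := by
    linarith [mul_le_mul_of_nonneg_left n1 hα.le,
      mul_le_mul_of_nonneg_left n2 (show (0:ℝ) ≤ -Real.log abar by linarith)]
  have pΔa1 : 1 ≤ Real.exp (2 * (s₂ - s₁) * Real.log a) := by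
    have h : Real.exp 0 ≤ Real.exp (2 * (s₂ - s₁) * Real.log a) :=
      Real.exp_le_exp.mpr (by linarith [mul_nonneg hΔ hα.le])
    rwa [Real.exp_zero] at h
  have pΔab : Real.exp (2 * (s₂ - s₁) * Real.log abar) ≤
      Real.exp (2 * (s₂ - s₁) * Real.log a) :=
    Real.exp_le_exp.mpr (by linarith [mul_nonneg hΔ (show (0:ℝ) ≤ Real.log a - Real.log abar by linarith)])
  have pΔac : Real.exp (2 * (s₂ - s₁) * Real.log c) ≤ Real.exp (2 * (s₂ - s₁) * Real.log a) :=
    Real.exp_le_exp.mpr (by linarith [mul_nonneg hΔ hαβ.le])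
  have hd : Real.exp (2 * s₁ * Real.log abar) < Real.exp (2 * s₁ * Real.log c) :=
    Real.exp_lt_exp.mpr (by linarith [mul_pos hs1pos hβγ])
  have hdpos : 0 < Real.exp (2 * s₁ * Real.log c) - Real.exp (2 * s₁ * Real.log abar) := by
    linarith
  have hA1B : B * (Real.exp (2 * s₁ * Real.log c) - Real.exp (2 * s₁ * Real.log abar)) <
      M * (Real.exp (2 * s₁ * Real.log a) - 1) * Real.exp (2 * s₁ * Real.log c) := by
    have u1 := mul_lt_mul_of_pos_right hf2 hdpos
    have u2 := mul_lt_mul_of_pos_left hdy (Real.exp_pos (2 * s₁ * Real.log abar))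
    linarith
  -- f₁ part at s₂
  have key1 : Real.exp (2 * s₁ * Real.log abar) *
      (Real.exp (2 * (s₂ - s₁) * Real.log a) - Real.exp (2 * (s₂ - s₁) * Real.log abar)) ≤
      Real.exp (2 * s₁ * Real.log c) *
      (Real.exp (2 * (s₂ - s₁) * Real.log a) - Real.exp (2 * (s₂ - s₁) * Real.log c)) := by
    have t1 := mul_le_mul_of_nonneg_left claim1 (Real.exp_pos (2 * s₁ * Real.log abar)).le
    have t2 := mul_le_mul_of_nonneg_right hLs
      (show (0:ℝ) ≤ Real.exp (2 * (s₂ - s₁) * Real.log a) -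
        Real.exp (2 * (s₂ - s₁) * Real.log c) by linarith)
    have t3 : (Real.log a - Real.log c) * (Real.exp (2 * s₁ * Real.log abar) *
        (Real.exp (2 * (s₂ - s₁) * Real.log a) - Real.exp (2 * (s₂ - s₁) * Real.log abar))) ≤
        (Real.log a - Real.log c) * (Real.exp (2 * s₁ * Real.log c) *
        (Real.exp (2 * (s₂ - s₁) * Real.log a) - Real.exp (2 * (s₂ - s₁) * Real.log c))) := by
      linarith
    exact le_of_mul_le_mul_left t3 hαβ
  have G1 : Real.exp (2 * s₂ * Real.log c) * y <
      Real.exp (2 * s₂ * Real.log abar) * y + M * (Real.exp (2 * s₂ * Real.log a) - 1) := by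
    rw [split (Real.log c), split (Real.log abar), split (Real.log a)]
    have k0 : Real.exp (2 * s₁ * Real.log c) * Real.exp (2 * (s₂ - s₁) * Real.log c) -
        Real.exp (2 * s₁ * Real.log abar) * Real.exp (2 * (s₂ - s₁) * Real.log abar) ≤
        Real.exp (2 * (s₂ - s₁) * Real.log a) *
        (Real.exp (2 * s₁ * Real.log c) - Real.exp (2 * s₁ * Real.log abar)) := by
      linarith [key1]
    have k1 := mul_le_mul_of_nonneg_right k0 hy
    have k2 : Real.exp (2 * (s₂ - s₁) * Real.log a) *
        ((Real.exp (2 * s₁ * Real.log c) - Real.exp (2 * s₁ * Real.log abar)) * y) <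
        Real.exp (2 * (s₂ - s₁) * Real.log a) * (M * (Real.exp (2 * s₁ * Real.log a) - 1)) :=
      mul_lt_mul_of_pos_left hdy (Real.exp_pos _)
    have k3 : Real.exp (2 * (s₂ - s₁) * Real.log a) *
        (M * (Real.exp (2 * s₁ * Real.log a) - 1)) ≤
        M * (Real.exp (2 * s₁ * Real.log a) * Real.exp (2 * (s₂ - s₁) * Real.log a) - 1) := by
      linarith [mul_nonneg hM.le
        (show (0:ℝ) ≤ Real.exp (2 * (s₂ - s₁) * Real.log a) - 1 by linarith)]
    linarith
  -- f₂ part at s₂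
  have key2 : B * (Real.exp (2 * s₁ * Real.log abar) *
      (Real.exp (2 * (s₂ - s₁) * Real.log a) - Real.exp (2 * (s₂ - s₁) * Real.log abar))) ≤
      B * (Real.exp (2 * s₁ * Real.log c) * (Real.exp (2 * (s₂ - s₁) * Real.log a) - 1)) := by
    have t1 := mul_le_mul_of_nonneg_left claim2 (Real.exp_pos (2 * s₁ * Real.log abar)).le
    have t2 := mul_le_mul_of_nonneg_right hKs
      (show (0:ℝ) ≤ Real.exp (2 * (s₂ - s₁) * Real.log a) - 1 by linarith)
    have t3 : Real.log a * (Real.exp (2 * s₁ * Real.log abar) *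
        (Real.exp (2 * (s₂ - s₁) * Real.log a) - Real.exp (2 * (s₂ - s₁) * Real.log abar))) ≤
        Real.log a * (Real.exp (2 * s₁ * Real.log c) *
        (Real.exp (2 * (s₂ - s₁) * Real.log a) - 1)) := by
      linarith
    exact mul_le_mul_of_nonneg_left (le_of_mul_le_mul_left t3 hα) hBpos.le
  have G2 : B < Real.exp (2 * s₂ * Real.log abar) * y +
      M * (Real.exp (2 * s₂ * Real.log a) - 1) := by
    rw [split (Real.log abar), split (Real.log a)]
    have h5 : Real.exp (2 * (s₂ - s₁) * Real.log abar) *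
        (B - M * (Real.exp (2 * s₁ * Real.log a) - 1)) <
        Real.exp (2 * (s₂ - s₁) * Real.log abar) *
        (Real.exp (2 * s₁ * Real.log abar) * y) := by
      apply mul_lt_mul_of_pos_left _ (Real.exp_pos _)
      linarith
    have t5 := mul_le_mul_of_nonneg_right hA1B.le
      (show (0:ℝ) ≤ Real.exp (2 * (s₂ - s₁) * Real.log a) -
        Real.exp (2 * (s₂ - s₁) * Real.log abar) by linarith)
    have t6 : (0:ℝ) ≤ M * (Real.exp (2 * (s₂ - s₁) * Real.log a) - 1) *
        Real.exp (2 * s₁ * Real.log c) :=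
      mul_nonneg (mul_nonneg hM.le (by linarith)) (Real.exp_pos _).le
    have hRec : 0 * Real.exp (2 * s₁ * Real.log c) ≤
        (M * (Real.exp (2 * s₁ * Real.log a) - 1) *
          (Real.exp (2 * (s₂ - s₁) * Real.log a) - Real.exp (2 * (s₂ - s₁) * Real.log abar)) +
          M * (Real.exp (2 * (s₂ - s₁) * Real.log a) - 1) -
          B * (1 - Real.exp (2 * (s₂ - s₁) * Real.log abar))) *
          Real.exp (2 * s₁ * Real.log c) := by
      linarith [t5, key2, t6]
    have hR : (0:ℝ) ≤
        M * (Real.exp (2 * s₁ * Real.log a) - 1) *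
          (Real.exp (2 * (s₂ - s₁) * Real.log a) - Real.exp (2 * (s₂ - s₁) * Real.log abar)) +
          M * (Real.exp (2 * (s₂ - s₁) * Real.log a) - 1) -
          B * (1 - Real.exp (2 * (s₂ - s₁) * Real.log abar)) :=
      le_of_mul_le_mul_right hRec (Real.exp_pos _)
    linarith [h5, hR]
  have hgoal : max (Real.exp (2 * s₂ * Real.log c) * y) B <
      Real.exp (2 * s₂ * Real.log abar) * y + M * (Real.exp (2 * s₂ * Real.log a) - 1) :=
    max_lt G1 G2
  have hHdef2 : Hfun a abar c M B s₂ y =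
      Real.exp (2 * s₂ * Real.log abar) * y + M * (Real.exp (2 * s₂ * Real.log a) - 1) -
        max (Real.exp (2 * s₂ * Real.log c) * y) B := rfl
  rw [hHdef2]
  linarith
end
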